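/- Alternative for quadratic systems with Z-matrix data: Let N ≥ 1, X ⊆ ℝ^N with ℝ^N_+ ⊆ X, Λ nonempty, and for each λ ∈ Λ let A_λ ∈ 𝕊^N, b_λ ∈ ℝ^N, c_λ ∈ ℝ with [[A_λ, b_λ],[b_λ^T, 2c_λ]] a Z-matrix. Let q_λ(x) = (1/2)x^T A_λ x + b_λ^T x + c_λ and assume λ ↦ q_λ(x) is bounded for each x ∈ X. Then exactly one of: (a1) there exists x ∈ X with sup_{λ∈Λ} q_λ(x) < 0; (a2) there exists a positive linear functional L on ℓ^∞(Λ) with L(𝟏)=1 and inf_{x∈X} L({q_λ(x)}_{λ∈Λ}) ≥ 0. -/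

import Mathlib

open Matrix
open scoped ENNReal

/-- A Z-matrix: a real symmetric matrix with nonpositive off-diagonal entries. -/
def IsZMatrix {n : Type*} [DecidableEq n] (M : Matrix n n ℝ) : Prop :=
  M.IsSymm ∧ ∀ i j, i ≠ j → M i j ≤ 0

/-- The constant-one function in `ℓ^∞(Λ)`. -/
noncomputable def lpinfOne (Λ : Type*) : lp (fun _ : Λ => ℝ) ∞ :=
  ⟨fun _ => (1 : ℝ), memℓp_infty ⟨1, by rintro x ⟨l, rfl⟩; simp⟩⟩

/-! The quadratic form of a matrix with nonpositive off-diagonal entries has a hidden convexity: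
replacing two vectors `u, v` by their coordinatewise Euclidean norm `√(u² + v²)` does not increase
`uᵀMu + vᵀMv`, by Cauchy–Schwarz on the off-diagonal terms. Homogenizing, `q_λ(x)` is the quadratic
form of `M_λ = ½ [[A_λ, b_λ], [b_λᵀ, 2c_λ]]` at `(x, 1)`, so the bounded functions on `Λ` dominating
`λ ↦ vᵀM_λv` for a common `v` form a convex cone containing every `q(x)` and every nonnegative
function. If no `x ∈ X` has `sup_λ q_λ(x) < 0`, this cone meets the line `ℝ𝟏` only in its
nonnegative half, and the M. Riesz extension theorem produces a positive normalized functional that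
is nonnegative on the cone. Conversely a positive normalized functional satisfies `L Φ ≤ sup Φ`, so
both alternatives cannot hold at once. -/

theorem Real.mul_add_mul_le_sqrt_mul_sqrt (a b c d : ℝ) :
    a * c + b * d ≤ √(a ^ 2 + b ^ 2) * √(c ^ 2 + d ^ 2) := by
  simpa [Fin.sum_univ_two] using Real.sum_mul_le_sqrt_mul_sqrt Finset.univ ![a, b] ![c, d]

namespace Matrix

variable {m : Type*} [Fintype m] {M : Matrix m m ℝ}

theorem dotProduct_mulVec_eq_sum (M : Matrix m m ℝ) (u v : m → ℝ) :
    u ⬝ᵥ M *ᵥ v = ∑ i, ∑ j, M i j * (u i * v j) := by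
  simp only [dotProduct, mulVec, Finset.mul_sum]
  exact Finset.sum_congr rfl fun i _ => Finset.sum_congr rfl fun j _ => by ring

theorem sqrt_sq_add_sq_dotProduct_mulVec_le (hM : ∀ i j, i ≠ j → M i j ≤ 0) (u v : m → ℝ) :
    (fun i => √(u i ^ 2 + v i ^ 2)) ⬝ᵥ M *ᵥ (fun i => √(u i ^ 2 + v i ^ 2)) ≤
      u ⬝ᵥ M *ᵥ u + v ⬝ᵥ M *ᵥ v := by
  simp only [dotProduct_mulVec_eq_sum, ← Finset.sum_add_distrib]
  refine Finset.sum_le_sum fun i _ => Finset.sum_le_sum fun j _ => ?_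
  rcases eq_or_ne i j with rfl | hij
  · rw [Real.mul_self_sqrt (by positivity)]
    exact le_of_eq (by ring)
  · have := Real.mul_add_mul_le_sqrt_mul_sqrt (u i) (v i) (u j) (v j)
    nlinarith [hM i j hij]

theorem abs_dotProduct_mulVec_le (hM : ∀ i j, i ≠ j → M i j ≤ 0) (v : m → ℝ) :
    (fun i => |v i|) ⬝ᵥ M *ᵥ (fun i => |v i|) ≤ v ⬝ᵥ M *ᵥ v := by
  simpa [Real.sqrt_sq_eq_abs] using sqrt_sq_add_sq_dotProduct_mulVec_le hM v 0

theorem smul_dotProduct_mulVec_smul {R : Type*} [CommSemiring R] (M : Matrix m m R) (t : R)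
    (v : m → R) :
    t • v ⬝ᵥ M *ᵥ (t • v) = t ^ 2 * (v ⬝ᵥ M *ᵥ v) := by
  rw [mulVec_smul, smul_dotProduct, dotProduct_smul, smul_eq_mul, smul_eq_mul, ← mul_assoc, sq]

theorem sumElim_one_dotProduct_half_fromBlocks_mulVec {n : Type*} [Fintype n]
    (A : Matrix n n ℝ) (b : n → ℝ) (c : ℝ) (x : n → ℝ) :
    Sum.elim x 1 ⬝ᵥ ((1 / 2 : ℝ) • fromBlocks A (replicateCol (Fin 1) b) (replicateRow (Fin 1) b)
      (of fun _ _ => 2 * c)) *ᵥ Sum.elim x 1 = (1 / 2) * (x ⬝ᵥ A *ᵥ x) + b ⬝ᵥ x + c := by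
  simp only [smul_mulVec, dotProduct_smul, fromBlocks_mulVec, Sum.elim_comp_inl,
    Sum.elim_comp_inr, sumElim_dotProduct_sumElim]
  simp [dotProduct, mulVec, replicateCol, replicateRow, mul_add, Finset.sum_add_distrib,
    mul_comm (x _) (b _)]
  ring

end Matrix

theorem Sum.elim_comp_inl_one {n : Type*} {v : n ⊕ Fin 1 → ℝ} (hv : v (Sum.inr 0) = 1) :
    Sum.elim (v ∘ Sum.inl) 1 = v := by
  ext (i | j)
  · rfl
  · rw [Fin.fin_one_eq_zero j]
    exact hv.symm

theorem EReal.iSup_coe_lt_coe_iff {ι : Sort*} (f : ι → ℝ) (a : ℝ) :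
    (⨆ i, (f i : EReal)) < a ↔ ∃ b < a, ∀ i, f i ≤ b := by
  constructor
  · intro h
    obtain ⟨b, hfb, hba⟩ := EReal.lt_iff_exists_real_btwn.1 h
    exact ⟨b, by exact_mod_cast hba, fun i => by exact_mod_cast (le_iSup _ i).trans hfb.le⟩
  · rintro ⟨b, hba, hfb⟩
    exact (iSup_le fun i => EReal.coe_le_coe_iff.2 (hfb i)).trans_lt (EReal.coe_lt_coe_iff.2 hba)

section PositiveFunctional

variable {Λ : Type*}

@[simp]
theorem lpinfOne_apply (l : Λ) : lpinfOne Λ l = 1 := rfl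

theorem map_le_of_forall_apply_le {L : lp (fun _ : Λ => ℝ) ∞ →ₗ[ℝ] ℝ}
    (hpos : ∀ Φ : lp (fun _ : Λ => ℝ) ∞, (∀ l, 0 ≤ Φ l) → 0 ≤ L Φ) (hone : L (lpinfOne Λ) = 1)
    {Φ : lp (fun _ : Λ => ℝ) ∞} {ε : ℝ} (h : ∀ l, Φ l ≤ ε) : L Φ ≤ ε := by
  have := hpos (ε • lpinfOne Λ - Φ) fun l => by
    simpa only [lp.coeFn_sub, lp.coeFn_smul, Pi.sub_apply, Pi.smul_apply, lpinfOne_apply,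
      smul_eq_mul, mul_one, sub_nonneg] using h l
  rwa [map_sub, map_smul, hone, smul_eq_mul, mul_one, sub_nonneg] at this

theorem exists_positive_functional_nonneg_on_pointedCone
    (K : PointedCone ℝ (lp (fun _ : Λ => ℝ) ∞))
    (hpos : ∀ Φ : lp (fun _ : Λ => ℝ) ∞, (∀ l, 0 ≤ Φ l) → Φ ∈ K)
    (hone : ∀ t : ℝ, t • lpinfOne Λ ∈ K → 0 ≤ t) :
    ∃ L : lp (fun _ : Λ => ℝ) ∞ →ₗ[ℝ] ℝ,
      (∀ Φ : lp (fun _ : Λ => ℝ) ∞, (∀ l, 0 ≤ Φ l) → 0 ≤ L Φ) ∧ L (lpinfOne Λ) = 1 ∧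
        ∀ Φ ∈ K, 0 ≤ L Φ := by
  let f : lp (fun _ : Λ => ℝ) ∞ →ₗ.[ℝ] ℝ :=
    LinearPMap.mkSpanSingleton' (lpinfOne Λ) (1 : ℝ) fun t ht => by
      have h₁ := hone t (ht ▸ K.zero_mem)
      have h₂ := hone (-t) (by rw [neg_smul, ht, neg_zero]; exact K.zero_mem)
      rw [smul_eq_mul, mul_one, RingHom.id_apply]
      linarith
  obtain ⟨L, hLf, hLK⟩ := riesz_extension K f
    (fun ⟨x, hx⟩ hxK => by
      obtain ⟨t, rfl⟩ := Submodule.mem_span_singleton.1 hx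
      rw [LinearPMap.mkSpanSingleton'_apply, RingHom.id_apply, smul_eq_mul, mul_one]
      exact hone t hxK)
    (fun Φ => ⟨⟨‖Φ‖ • lpinfOne Λ, Submodule.smul_mem _ _ (Submodule.mem_span_singleton_self _)⟩,
      hpos _ fun l => by
        have := (Real.norm_eq_abs _).symm.trans_le (lp.norm_apply_le_norm ENNReal.top_ne_zero Φ l)
        simp only [lp.coeFn_add, lp.coeFn_smul, Pi.add_apply, Pi.smul_apply, lpinfOne_apply,
          smul_eq_mul, mul_one]
        linarith [neg_abs_le (Φ l)]⟩)
  refine ⟨L, fun Φ hΦ => hLK Φ (hpos Φ hΦ), ?_, hLK⟩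
  rw [hLf ⟨lpinfOne Λ, Submodule.mem_span_singleton_self _⟩]
  exact LinearPMap.mkSpanSingleton'_apply_self _ _ _ _

end PositiveFunctional

section DominatingCone

variable {Λ m : Type*} [Fintype m] (M : Λ → Matrix m m ℝ) (hM : ∀ l i j, i ≠ j → M l i j ≤ 0)
  (i₀ : m)

/-- `i₀` is the homogenizing coordinate; allowing it to vanish only at `v = 0` excludes the
directions at infinity. -/
def dominatingCone : PointedCone ℝ (lp (fun _ : Λ => ℝ) ∞) where
  carrier := {Φ | ∃ v : m → ℝ, (v i₀ = 0 → v = 0) ∧ ∀ l, v ⬝ᵥ M l *ᵥ v ≤ Φ l}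
  zero_mem' := ⟨0, fun _ => rfl, fun l => by simp⟩
  add_mem' := by
    rintro Φ Ψ ⟨u, hu₀, hu⟩ ⟨v, hv₀, hv⟩
    refine ⟨fun i => √(u i ^ 2 + v i ^ 2), fun h => ?_, fun l => ?_⟩
    · obtain ⟨hui, hvi⟩ := (add_eq_zero_iff_of_nonneg (sq_nonneg _) (sq_nonneg _)).1
        ((Real.sqrt_eq_zero (by positivity)).1 h)
      rw [hu₀ ((pow_eq_zero_iff two_ne_zero).1 hui), hv₀ ((pow_eq_zero_iff two_ne_zero).1 hvi)]
      ext i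
      simp
    · exact (Matrix.sqrt_sq_add_sq_dotProduct_mulVec_le (hM l) u v).trans (add_le_add (hu l) (hv l))
  smul_mem' := by
    rintro ⟨t, ht⟩ Φ ⟨v, hv₀, hv⟩
    refine ⟨√t • v, fun h => ?_, fun l => ?_⟩
    · rcases mul_eq_zero.1 h with h | h
      · rw [h, zero_smul]
      · rw [hv₀ h, smul_zero]
    · rw [Matrix.smul_dotProduct_mulVec_smul, Real.sq_sqrt ht]
      exact mul_le_mul_of_nonneg_left (hv l) ht

variable {M i₀}

theorem mem_dominatingCone_of_nonneg {Φ : lp (fun _ : Λ => ℝ) ∞} (hΦ : ∀ l, 0 ≤ Φ l) :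
    Φ ∈ dominatingCone M hM i₀ :=
  ⟨0, fun _ => rfl, fun l => by simpa using hΦ l⟩

theorem nonneg_of_smul_lpinfOne_mem_dominatingCone
    (h : ∀ v : m → ℝ, (∀ i, 0 ≤ v i) → v i₀ = 1 → ∀ ε < 0, ∃ l, ε < v ⬝ᵥ M l *ᵥ v)
    {t : ℝ} (ht : t • lpinfOne Λ ∈ dominatingCone M hM i₀) : 0 ≤ t := by
  obtain ⟨v, hv₀, hv⟩ := ht
  by_contra! htneg
  set w : m → ℝ := fun i => |v i|
  have hw : ∀ l, w ⬝ᵥ M l *ᵥ w ≤ t := fun l =>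
    (Matrix.abs_dotProduct_mulVec_le (hM l) v).trans (by simpa using hv l)
  have hτ : 0 < |v i₀| := by
    refine abs_pos.2 fun h₀ => ?_
    -- `Λ` is nonempty: apply `h` to the constant vector
    obtain ⟨l, -⟩ := h 1 (fun _ => zero_le_one) rfl (-1) (by norm_num)
    have := hv l
    simp [hv₀ h₀] at this
    linarith
  obtain ⟨l, hl⟩ := h (|v i₀|⁻¹ • w) (fun i => by simp only [w, Pi.smul_apply]; positivity)
    (by simp [w, hτ.ne'])
    (t / |v i₀| ^ 2) (div_neg_of_neg_of_pos htneg (by positivity))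
  rw [Matrix.smul_dotProduct_mulVec_smul, inv_pow, ← div_eq_inv_mul] at hl
  exact (div_le_div_of_nonneg_right (hw l) (by positivity)).not_gt hl

end DominatingCone

theorem stmt11_general (N : ℕ) (Λ : Type*)
    (X : Set (Fin N → ℝ)) (hX : ∀ x : Fin N → ℝ, (∀ k, 0 ≤ x k) → x ∈ X)
    (A : Λ → Matrix (Fin N) (Fin N) ℝ) (b : Λ → Fin N → ℝ) (c : Λ → ℝ)
    (hZ : ∀ l, IsZMatrix (Matrix.fromBlocks (A l) (Matrix.replicateCol (Fin 1) (b l))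
      (Matrix.replicateRow (Fin 1) (b l)) (Matrix.of fun _ _ => 2 * c l)))
    (q : Λ → (Fin N → ℝ) → ℝ)
    (hq : ∀ l x, q l x = (1 / 2) * (x ⬝ᵥ (A l).mulVec x) + b l ⬝ᵥ x + c l)
    (F : X → lp (fun _ : Λ => ℝ) ∞) (hF : ∀ (x : X) (l : Λ), F x l = q l x) :
    Xor'
      (∃ x ∈ X, (⨆ l, (q l x : EReal)) < 0)
      (∃ L : lp (fun _ : Λ => ℝ) ∞ →ₗ[ℝ] ℝ,
        (∀ Φ : lp (fun _ : Λ => ℝ) ∞, (∀ l, 0 ≤ Φ l) → 0 ≤ L Φ) ∧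
        L (lpinfOne Λ) = 1 ∧
        (0 : EReal) ≤ ⨅ x : X, (L (F x) : EReal)) := by
  refine xor_iff_iff_not.2 ⟨?_, not_imp_comm.1 fun hno => ?_⟩
  · rintro ⟨x, hx, hsup⟩ ⟨L, hpos, hL1, hinf⟩
    obtain ⟨ε, hε, hqε⟩ := (EReal.iSup_coe_lt_coe_iff _ 0).1 hsup
    have h₁ : L (F ⟨x, hx⟩) ≤ ε :=
      map_le_of_forall_apply_le hpos hL1 fun l => (hF _ l).trans_le (hqε l)
    have h₂ : (0 : EReal) ≤ L (F ⟨x, hx⟩) := hinf.trans (iInf_le _ _)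
    exact (EReal.coe_nonneg.1 h₂).not_gt (h₁.trans_lt hε)
  let M l := (1 / 2 : ℝ) • fromBlocks (A l) (replicateCol (Fin 1) (b l))
    (replicateRow (Fin 1) (b l)) (of fun _ _ => 2 * c l)
  have hM : ∀ l i j, i ≠ j → M l i j ≤ 0 := fun l i j hij =>
    mul_nonpos_of_nonneg_of_nonpos (by norm_num) ((hZ l).2 i j hij)
  have hMq : ∀ l z, Sum.elim z 1 ⬝ᵥ M l *ᵥ Sum.elim z 1 = q l z := fun l z => by
    rw [sumElim_one_dotProduct_half_fromBlocks_mulVec, hq]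
  have hsol : ∀ v : Fin N ⊕ Fin 1 → ℝ, (∀ i, 0 ≤ v i) → v (Sum.inr 0) = 1 →
      ∀ ε < 0, ∃ l, ε < v ⬝ᵥ M l *ᵥ v := fun v hv hv₁ ε hε => by
    by_contra! h
    refine hno ⟨v ∘ Sum.inl, hX _ fun k => hv _,
      (EReal.iSup_coe_lt_coe_iff _ 0).2 ⟨ε, hε, fun l => ?_⟩⟩
    rw [← hMq, Sum.elim_comp_inl_one hv₁]
    exact h l
  obtain ⟨L, hpos, hL1, hK⟩ := exists_positive_functional_nonneg_on_pointedCone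
    (dominatingCone M hM (Sum.inr 0)) (fun _ => mem_dominatingCone_of_nonneg hM)
    (fun _ => nonneg_of_smul_lpinfOne_mem_dominatingCone hM hsol)
  refine ⟨L, hpos, hL1, le_iInf fun x => EReal.coe_nonneg.2 (hK _ ?_)⟩
  exact ⟨Sum.elim x 1, fun h => absurd h one_ne_zero, fun l => by rw [hMq, hF]⟩

/-- Alternative theorem for a (possibly infinite) system of quadratic inequalities with
Z-matrix data: either the system `sup_λ q_λ(x) < 0` has a solution in `X`, or some
positive normalized linear functional `L` on `ℓ^∞(Λ)` gives `inf_{x∈X} L({q_λ(x)}) ≥ 0`,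
but never both. -/
theorem stmt11 (N : ℕ) (hN : 1 ≤ N) (Λ : Type*) [Nonempty Λ]
    (X : Set (Fin N → ℝ)) (hX : ∀ x : Fin N → ℝ, (∀ k, 0 ≤ x k) → x ∈ X)
    (A : Λ → Matrix (Fin N) (Fin N) ℝ) (b : Λ → Fin N → ℝ) (c : Λ → ℝ)
    (hZ : ∀ l, IsZMatrix (Matrix.fromBlocks (A l) (Matrix.replicateCol (Fin 1) (b l))
      (Matrix.replicateRow (Fin 1) (b l)) (Matrix.of fun _ _ => 2 * c l)))
    (q : Λ → (Fin N → ℝ) → ℝ)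
    (hq : ∀ l x, q l x = (1 / 2) * (x ⬝ᵥ (A l).mulVec x) + b l ⬝ᵥ x + c l)
    (F : X → lp (fun _ : Λ => ℝ) ∞) (hF : ∀ (x : X) (l : Λ), F x l = q l x) :
    Xor'
      (∃ x ∈ X, (⨆ l, (q l x : EReal)) < 0)
      (∃ L : lp (fun _ : Λ => ℝ) ∞ →ₗ[ℝ] ℝ,
        (∀ Φ : lp (fun _ : Λ => ℝ) ∞, (∀ l, 0 ≤ Φ l) → 0 ≤ L Φ) ∧
        L (lpinfOne Λ) = 1 ∧
        (0 : EReal) ≤ ⨅ x : X, (L (F x) : EReal)) :=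
  stmt11_general N Λ X hX A b c hZ q hq F hF
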